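/- arXiv:1511.03225 — 2 statements merged into one kernel-verified Lean document; each statement's English description precedes it below -/
import Mathlib

section
/- Let X be uniformly distributed on the closed ball of radius r > 0 centered at the origin in ℝᵈ, and 0 ≤ ρ ≤ r/√2. Then (v_{d-1}/v_d) · 2^{-(d-1)/2} · (ρ/r) ≤ P(X₁ ∈ [0,ρ]) ≤ (v_{d-1}/v_d) · (ρ/r), where v_k is the volume of the unit ball in ℝᵏ. -/
/-!
Splitting off the first coordinate identifies `ℝⁿ⁺¹` with `ℝ × ℝⁿ`, preserving volume and
Pythagoras' formula for the norm. The slice `{x ∈ B(0, r) | x₀ ∈ [0, ρ]}` then lies between the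
cylinders `[0, ρ] × B(0, s)` and `[0, ρ] × B(0, r)` whenever `ρ² + s² ≤ r²`, which holds for
`s = r / √2` once `ρ ≤ r / √2`. The cylinders have volumes `ρ sⁿ vₙ` and `ρ rⁿ vₙ`, and
dividing by `vol B(0, r) = rⁿ⁺¹ vₙ₊₁` gives both bounds.
-/

open MeasureTheory Metric ProbabilityTheory

namespace EuclideanSpace

def succMeasurableEquivProd (n : ℕ) :
    EuclideanSpace ℝ (Fin (n + 1)) ≃ᵐ ℝ × EuclideanSpace ℝ (Fin n) :=
  (MeasurableEquiv.toLp 2 _).symm.trans <|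
    (MeasurableEquiv.piFinSuccAbove (fun _ => ℝ) 0).trans <|
      MeasurableEquiv.prodCongr (MeasurableEquiv.refl ℝ) (MeasurableEquiv.toLp 2 _)

variable {n : ℕ}

@[simp]
lemma succMeasurableEquivProd_apply_snd (x : EuclideanSpace ℝ (Fin (n + 1))) :
    (succMeasurableEquivProd n x).2 = WithLp.toLp 2 (Fin.tail x) := rfl

lemma norm_sq_eq_sq_add_norm_succMeasurableEquivProd_snd_sq
    (x : EuclideanSpace ℝ (Fin (n + 1))) :
    ‖x‖ ^ 2 = x 0 ^ 2 + ‖(succMeasurableEquivProd n x).2‖ ^ 2 := by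
  simp [EuclideanSpace.norm_sq_eq, Fin.sum_univ_succ, Fin.tail]

lemma volume_preserving_succMeasurableEquivProd :
    MeasurePreserving (succMeasurableEquivProd n) :=
  (EuclideanSpace.volume_preserving_symm_measurableEquiv_toLp _).trans <|
    (volume_preserving_piFinSuccAbove (fun _ => ℝ) 0).trans <|
      (MeasurePreserving.id volume).prod (PiLp.volume_preserving_toLp _)

lemma volume_preimage_succMeasurableEquivProd_prod (I : Set ℝ)
    (s : Set (EuclideanSpace ℝ (Fin n))) :
    volume (succMeasurableEquivProd n ⁻¹' I ×ˢ s) = volume I * volume s := by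
  rw [volume_preserving_succMeasurableEquivProd.measure_preimage_equiv, Measure.volume_eq_prod,
    Measure.prod_prod]

end EuclideanSpace

lemma ProbabilityTheory.cond_apply_eq_ofReal {Ω : Type*} [MeasurableSpace Ω] {μ : Measure Ω}
    {s : Set Ω} (hs : MeasurableSet s) (t : Set Ω) :
    μ[t|s] = ENNReal.ofReal (μ.real (s ∩ t) / μ.real s) := by
  rw [← ofReal_measureReal (measure_ne_top _ _), measureReal_def, cond_apply hs,
    ENNReal.toReal_mul, ENNReal.toReal_inv, div_eq_inv_mul, measureReal_def, measureReal_def]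

section BallSlice

open EuclideanSpace

def ballSlice (n : ℕ) (r : ℝ) (I : Set ℝ) : Set (EuclideanSpace ℝ (Fin (n + 1))) :=
  closedBall 0 r ∩ {x | x 0 ∈ I}

variable {n : ℕ} {r s ρ : ℝ} {I : Set ℝ}

lemma ballSlice_subset_preimage_prod_closedBall :
    ballSlice n r I ⊆ succMeasurableEquivProd n ⁻¹' I ×ˢ closedBall 0 r := by
  rintro x ⟨hxr, hxI⟩
  rw [mem_closedBall_zero_iff] at hxr
  refine ⟨hxI, mem_closedBall_zero_iff.2 ?_⟩
  have := norm_sq_eq_sq_add_norm_succMeasurableEquivProd_snd_sq x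
  nlinarith [norm_nonneg x, norm_nonneg (succMeasurableEquivProd n x).2]

lemma preimage_prod_closedBall_subset_ballSlice (hr : 0 ≤ r)
    (hI : ∀ t ∈ I, t ^ 2 + s ^ 2 ≤ r ^ 2) :
    succMeasurableEquivProd n ⁻¹' I ×ˢ closedBall 0 s ⊆ ballSlice n r I := by
  rintro x ⟨hxI, hxs⟩
  rw [mem_closedBall_zero_iff] at hxs
  refine ⟨mem_closedBall_zero_iff.2
    ((pow_le_pow_iff_left₀ (norm_nonneg x) hr two_ne_zero).1 ?_), hxI⟩
  have := norm_sq_eq_sq_add_norm_succMeasurableEquivProd_snd_sq x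
  nlinarith [hI (x 0) hxI, norm_nonneg (succMeasurableEquivProd n x).2]

lemma volume_ballSlice_le :
    volume (ballSlice n r I) ≤
      volume I * volume (closedBall (0 : EuclideanSpace ℝ (Fin n)) r) :=
  volume_preimage_succMeasurableEquivProd_prod I _ ▸
    measure_mono ballSlice_subset_preimage_prod_closedBall

lemma volume_mul_le_volume_ballSlice (hr : 0 ≤ r) (hI : ∀ t ∈ I, t ^ 2 + s ^ 2 ≤ r ^ 2) :
    volume I * volume (closedBall (0 : EuclideanSpace ℝ (Fin n)) s) ≤
      volume (ballSlice n r I) :=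
  volume_preimage_succMeasurableEquivProd_prod I _ ▸
    measure_mono (preimage_prod_closedBall_subset_ballSlice hr hI)

lemma measureReal_ballSlice_Icc_le (hr : 0 ≤ r) (hρ : 0 ≤ ρ) :
    volume.real (ballSlice n r (Set.Icc 0 ρ)) ≤
      ρ * r ^ n * volume.real (ball (0 : EuclideanSpace ℝ (Fin n)) 1) := by
  have := ENNReal.toReal_mono
    (ENNReal.mul_ne_top measure_Icc_lt_top.ne measure_closedBall_lt_top.ne)
    (volume_ballSlice_le (n := n) (r := r) (I := Set.Icc 0 ρ))
  rwa [ENNReal.toReal_mul, ← measureReal_def, ← measureReal_def, ← measureReal_def,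
    Real.volume_real_Icc_of_le hρ, sub_zero, Measure.addHaar_real_closedBall _ _ hr,
    finrank_euclideanSpace_fin, ← mul_assoc] at this

lemma le_measureReal_ballSlice_Icc (hr : 0 ≤ r) (hs : 0 ≤ s) (hρ : 0 ≤ ρ)
    (hρs : ρ ^ 2 + s ^ 2 ≤ r ^ 2) :
    ρ * s ^ n * volume.real (ball (0 : EuclideanSpace ℝ (Fin n)) 1) ≤
      volume.real (ballSlice n r (Set.Icc 0 ρ)) := by
  have hI : ∀ t ∈ Set.Icc 0 ρ, t ^ 2 + s ^ 2 ≤ r ^ 2 := fun t ⟨ht0, htρ⟩ ↦ by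
    nlinarith [pow_le_pow_left₀ ht0 htρ 2]
  have := ENNReal.toReal_mono (measure_ne_top_of_subset Set.inter_subset_left
    measure_closedBall_lt_top.ne) (volume_mul_le_volume_ballSlice (n := n) hr hI)
  rwa [ENNReal.toReal_mul, ← measureReal_def, ← measureReal_def, ← measureReal_def,
    Real.volume_real_Icc_of_le hρ, sub_zero, Measure.addHaar_real_closedBall _ _ hs,
    finrank_euclideanSpace_fin, ← mul_assoc] at this

end BallSlice

lemma two_rpow_neg_div_two_eq_inv_sqrt_two_pow (n : ℕ) :
    (2 : ℝ) ^ (-(n : ℝ) / 2) = (Real.sqrt 2 ^ n)⁻¹ := by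
  rw [Real.sqrt_eq_rpow, ← Real.rpow_natCast, ← Real.rpow_mul zero_le_two,
    ← Real.rpow_neg zero_le_two, neg_div, one_div_mul_eq_div]

/-- If `X` is uniform on the closed ball of radius `r` in `ℝᵈ` and `0 ≤ ρ ≤ r/√2`,
then the probability that the first coordinate of `X` lies in `[0, ρ]` is between
`(v_{d-1}/v_d) · 2^{-(d-1)/2} · (ρ/r)` and `(v_{d-1}/v_d) · (ρ/r)`. -/
theorem uniform_ball_slice_probability_bounds
    {d : ℕ} (hd : 1 ≤ d) (r ρ : ℝ) (hr : 0 < r)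
    (hρ0 : 0 ≤ ρ) (hρ : ρ ≤ r / Real.sqrt 2) :
    let B : Set (EuclideanSpace ℝ (Fin d)) := closedBall 0 r
    let μ : Measure (EuclideanSpace ℝ (Fin d)) := (volume B)⁻¹ • volume.restrict B
    let S : Set (EuclideanSpace ℝ (Fin d)) :=
      {x | x (⟨0, by omega⟩ : Fin d) ∈ Set.Icc 0 ρ}
    let vd : ℝ := (volume (ball (0 : EuclideanSpace ℝ (Fin d)) 1)).toReal
    let vd1 : ℝ := (volume (ball (0 : EuclideanSpace ℝ (Fin (d - 1))) 1)).toReal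
    ENNReal.ofReal (vd1 / vd * 2 ^ (-((d : ℝ) - 1) / 2) * (ρ / r)) ≤ μ S ∧
      μ S ≤ ENNReal.ofReal (vd1 / vd * (ρ / r)) := by
  obtain ⟨n, rfl⟩ : ∃ n, d = n + 1 := ⟨d - 1, by omega⟩
  intro B μ S vd vd1
  have hvd : 0 < vd := ENNReal.toReal_pos (measure_ball_pos _ _ one_pos).ne' measure_ball_lt_top.ne
  have hμS :
      μ S = ENNReal.ofReal (volume.real (ballSlice n r (Set.Icc 0 ρ)) / (r ^ (n + 1) * vd)) := by
    rw [show μ S = volume[S|B] from rfl, cond_apply_eq_ofReal measurableSet_closedBall,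
      Measure.addHaar_real_closedBall _ _ hr.le, finrank_euclideanSpace_fin]
    rfl
  have hρs : ρ ^ 2 + (r / Real.sqrt 2) ^ 2 ≤ r ^ 2 := by
    have := pow_le_pow_left₀ hρ0 hρ 2
    rw [div_pow, Real.sq_sqrt zero_le_two] at this ⊢
    linarith
  have hlower : ρ * (r / Real.sqrt 2) ^ n * vd1 ≤ volume.real (ballSlice n r (Set.Icc 0 ρ)) :=
    le_measureReal_ballSlice_Icc hr.le (by positivity) hρ0 hρs
  have hupper : volume.real (ballSlice n r (Set.Icc 0 ρ)) ≤ ρ * r ^ n * vd1 :=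
    measureReal_ballSlice_Icc_le hr.le hρ0
  rw [hμS, Nat.cast_succ, add_sub_cancel_right, two_rpow_neg_div_two_eq_inv_sqrt_two_pow]
  constructor
  · refine ENNReal.ofReal_le_ofReal
      (le_of_eq_of_le ?_ (div_le_div_of_nonneg_right hlower (by positivity)))
    rw [div_pow]
    field_simp
    ring
  · refine ENNReal.ofReal_le_ofReal
      (le_of_le_of_eq (div_le_div_of_nonneg_right hupper (by positivity)) ?_)
    field_simp
    ring
end

section
/- Let G be a graph on a finite sample S ⊂ ℝᵈ with an edge between x and x' iff ‖x - x'‖ ≤ r_c. Suppose A ⊂ ℝᵈ is a connected set and S is a (r_c/4)-covering of A (every point of A is within distance r_c/4 of S). Then any two sample points x, x' ∈ S with dist(x, A) ≤ r_c/4 and dist(x', A) ≤ r_c/4 are connected by a path in G. -/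
open Metric Topology

/-!
Call two points of `A` linked if every sample point within `ε` of the first is joined in the
graph to every sample point within `ε` of the second. Linking is symmetric and, because `A` is
covered, transitive; points of `A` closer than `δ - 2ε` are linked by a single edge. So linking is
an equivalence relation with open classes, and a connected `A` forms a single class.
-/

section SingleLinkage

variable {X : Type*} [PseudoMetricSpace X]

def singleLinkageAdj (S : Set X) (δ : ℝ) (u v : X) : Prop :=
  u ∈ S ∧ v ∈ S ∧ dist u v ≤ δ

instance (S : Set X) (δ : ℝ) : Std.Symm (singleLinkageAdj S δ) where
  symm u v h := ⟨h.2.1, h.1, dist_comm u v ▸ h.2.2⟩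

theorem singleLinkageAdj_of_dist_le {S : Set X} {δ ε : ℝ} {a b s t : X} (hs : s ∈ S)
    (ht : t ∈ S) (has : dist a s ≤ ε) (hbt : dist b t ≤ ε) (hab : dist a b ≤ δ - 2 * ε) :
    singleLinkageAdj S δ s t := by
  refine ⟨hs, ht, ?_⟩
  calc dist s t ≤ dist s a + dist a b + dist b t := dist_triangle4 s a b t
    _ ≤ δ := by rw [dist_comm s a]; linarith

theorem IsPreconnected.reflTransGen_singleLinkageAdj {S A : Set X} {δ ε : ℝ} (hεδ : 2 * ε < δ)
    (hA : IsPreconnected A) (hcover : ∀ a ∈ A, ∃ s ∈ S, dist a s ≤ ε)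
    {a b s t : X} (ha : a ∈ A) (hb : b ∈ A) (hs : s ∈ S) (ht : t ∈ S)
    (has : dist a s ≤ ε) (hbt : dist b t ≤ ε) :
    Relation.ReflTransGen (singleLinkageAdj S δ) s t := by
  let Linked (a b : X) : Prop := ∀ s ∈ S, dist a s ≤ ε → ∀ t ∈ S, dist b t ≤ ε →
    Relation.ReflTransGen (singleLinkageAdj S δ) s t
  refine hA.induction₂ Linked (fun a _ => ?_) (fun a b c _ hb _ hab hbc => ?_)
    (fun a b _ _ hab => ?_) ha hb s hs has t ht hbt
  · have hnhds : ball a (δ - 2 * ε) ∈ 𝓝[A] a := mem_nhdsWithin_of_mem_nhds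
      (ball_mem_nhds a (by linarith))
    filter_upwards [hnhds] with b hab s hs has t ht hbt
    exact .single (singleLinkageAdj_of_dist_le hs ht has hbt (mem_ball'.mp hab).le)
  · intro s hs has t ht hct
    obtain ⟨u, hu, hbu⟩ := hcover b hb
    exact (hab s hs has u hu hbu).trans (hbc u hu hbu t ht hct)
  · intro s hs hbs t ht hat
    exact Std.Symm.symm _ _ (hab t ht hat s hs hbs)

theorem exists_singleLinkageAdj_of_infDist_lt {S A : Set X} {δ ε : ℝ}
    (hA : A.Nonempty) (hcover : ∀ a ∈ A, ∃ s ∈ S, dist a s ≤ ε)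
    {x : X} (hx : x ∈ S) (hxA : infDist x A < δ - ε) :
    ∃ a ∈ A, ∃ s ∈ S, dist a s ≤ ε ∧ singleLinkageAdj S δ x s := by
  obtain ⟨a, ha, hxa⟩ := (infDist_lt_iff hA).mp hxA
  obtain ⟨s, hs, has⟩ := hcover a ha
  refine ⟨a, ha, s, hs, has, hx, hs, ?_⟩
  calc dist x s ≤ dist x a + dist a s := dist_triangle x a s
    _ ≤ δ := by linarith

end SingleLinkage

theorem single_linkage_graph_connected_general
    {d : ℕ} (S : Set (EuclideanSpace ℝ (Fin d)))
    (A : Set (EuclideanSpace ℝ (Fin d))) (hA : IsConnected A)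
    (rc : ℝ) (hrc : 0 < rc)
    (hcover : ∀ a ∈ A, ∃ s ∈ S, dist a s ≤ rc / 4)
    (x x' : EuclideanSpace ℝ (Fin d)) (hx : x ∈ S) (hx' : x' ∈ S)
    (hxA : Metric.infDist x A ≤ rc / 4) (hx'A : Metric.infDist x' A ≤ rc / 4) :
    Relation.ReflTransGen (fun u v => u ∈ S ∧ v ∈ S ∧ dist u v ≤ rc) x x' := by
  obtain ⟨a, ha, s, hs, has, hxs⟩ :=
    exists_singleLinkageAdj_of_infDist_lt (δ := rc) hA.nonempty hcover hx (by linarith)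
  obtain ⟨a', ha', s', hs', has', hx's'⟩ :=
    exists_singleLinkageAdj_of_infDist_lt (δ := rc) hA.nonempty hcover hx' (by linarith)
  have hss' : Relation.ReflTransGen (singleLinkageAdj S rc) s s' :=
    hA.isPreconnected.reflTransGen_singleLinkageAdj (by linarith) hcover ha ha' hs hs' has has'
  exact (hss'.head hxs).tail (Std.Symm.symm _ _ hx's')

/-- Single-linkage connectivity: if the sample `S` is an `(r_c/4)`-covering of a
connected set `A`, then any two sample points within distance `r_c/4` of `A` are
connected by a path in the graph on `S` joining points at distance at most `r_c`. -/
theorem single_linkage_graph_connected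
    {d : ℕ} (S : Set (EuclideanSpace ℝ (Fin d))) (hSfin : S.Finite)
    (A : Set (EuclideanSpace ℝ (Fin d))) (hA : IsConnected A)
    (rc : ℝ) (hrc : 0 < rc)
    (hcover : ∀ a ∈ A, ∃ s ∈ S, dist a s ≤ rc / 4)
    (x x' : EuclideanSpace ℝ (Fin d)) (hx : x ∈ S) (hx' : x' ∈ S)
    (hxA : Metric.infDist x A ≤ rc / 4) (hx'A : Metric.infDist x' A ≤ rc / 4) :
    Relation.ReflTransGen (fun u v => u ∈ S ∧ v ∈ S ∧ dist u v ≤ rc) x x' :=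
  single_linkage_graph_connected_general S A hA rc hrc hcover x x' hx hx' hxA hx'A
end
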